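/- Let n be a positive integer, m a divisor of n, a and b integers with 0 ≤ a,b < n/m, and c an integer with 0 ≤ c < m and gcd(c,m) = 1. Let V be the ℂ-vector space of functions f : ℤ/mℤ → ℂ. Define ρ_{a,b,c} : H(n) → GL(V) by (ρ_{a,b,c}(x,y,z)f)(j) = e^{2πi·m(ax̃+bỹ)/n}·e^{2πi·c(ȳj+z̄)/m}·f(j+x̄), where x̃,ỹ are integer representatives of x,y, and x̄,ȳ,z̄ denote reductions mod m (well-defined since m | n). Then ρ_{a,b,c} is a group homomorphism: ρ_{a,b,c}((x,y,z)(x',y',z')) = ρ_{a,b,c}(x,y,z)·ρ_{a,b,c}(x',y',z') for all (x,y,z),(x',y',z') ∈ H(n). -/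

import Mathlib

/-- The Heisenberg group mod `n`, as triples `(x, y, z)` of elements of `ℤ/nℤ`. -/
abbrev Heis (n : ℕ) := ZMod n × ZMod n × ZMod n

/-- Multiplication in the Heisenberg group:
`(x,y,z)(x',y',z') = (x+x', y+y', z+z'+x*y')`. -/
def heisMul {n : ℕ} (g h : Heis n) : Heis n :=
  (g.1 + h.1, g.2.1 + h.2.1, g.2.2 + h.2.2 + g.1 * h.2.1)

/-- The representation `ρ_{a,b,c}` of `H(n)` on functions `f : ℤ/mℤ → ℂ`:
`(ρ_{a,b,c}(x,y,z)f)(j) = e^{2πi·m(a·x̃+b·ỹ)/n}·e^{2πi·c(ȳ·j+z̄)/m}·f(j+x̄)`,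
where `x̃, ỹ` are integer representatives of `x, y`, and bars denote reduction
mod `m` (well defined since `m ∣ n`). -/
noncomputable def heisRep (n m : ℕ) (hm : m ∣ n) (a b c : ℕ) (g : Heis n)
    (f : ZMod m → ℂ) : ZMod m → ℂ := fun j =>
  Complex.exp (2 * (Real.pi : ℂ) * Complex.I *
      ((m : ℂ) * ((a : ℂ) * ((g.1.val : ℕ) : ℂ) + (b : ℂ) * ((g.2.1.val : ℕ) : ℂ))) /
      (n : ℂ)) *
    Complex.exp (2 * (Real.pi : ℂ) * Complex.I *
      ((c : ℂ) *
        (((ZMod.castHom hm (ZMod m) g.2.1 * j + ZMod.castHom hm (ZMod m) g.2.2).val : ℕ) : ℂ)) /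
      (m : ℂ)) *
    f (j + ZMod.castHom hm (ZMod m) g.1)

/-! Both exponential factors of `ρ_{a,b,c}(x,y,z)` are values of the standard additive characters
of `ℤ/nℤ` and `ℤ/mℤ`, at `m(ax + by)` and at `c(ȳj + z̄)`. Multiplicativity of `ρ` thus reduces to
two ring identities; in the second one the cocycle term `x y'` of the group law is absorbed by
the shift `j ↦ j + x̄` of the argument. -/

open Complex ZMod

lemma ZMod.stdAddChar_natCast {N : ℕ} [NeZero N] (k : ℕ) :
    stdAddChar (k : ZMod N) = exp (2 * Real.pi * I * k / N) := by
  simpa using stdAddChar_coe (N := N) k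

lemma heisRep_apply {n m : ℕ} [NeZero n] [NeZero m] (hm : m ∣ n) (a b c : ℕ) (g : Heis n)
    (f : ZMod m → ℂ) (j : ZMod m) :
    heisRep n m hm a b c g f j =
      stdAddChar ((m * (a * g.1 + b * g.2.1) : ZMod n)) *
      stdAddChar ((c * (castHom hm (ZMod m) g.2.1 * j + castHom hm (ZMod m) g.2.2) : ZMod m)) *
      f (j + castHom hm (ZMod m) g.1) := by
  simp only [heisRep, ← Nat.cast_mul, ← Nat.cast_add, ← ZMod.stdAddChar_natCast]
  push_cast [natCast_val, cast_id]
  rfl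

theorem heisRep_hom_general (n m : ℕ) (hn : 0 < n) (hm : m ∣ n) (a b c : ℕ)
    (g g' : Heis n) (f : ZMod m → ℂ) :
    heisRep n m hm a b c (heisMul g g') f =
      heisRep n m hm a b c g (heisRep n m hm a b c g' f) := by
  have : NeZero n := NeZero.of_pos hn
  have : NeZero m := NeZero.of_pos (Nat.pos_of_dvd_of_pos hm hn)
  obtain ⟨x, y, z⟩ := g
  obtain ⟨x', y', z'⟩ := g'
  funext j
  simp only [heisRep_apply, heisMul, map_add, map_mul]
  set φ := castHom hm (ZMod m)
  have phase_n : stdAddChar ((m * (a * (x + x') + b * (y + y')) : ZMod n)) =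
      stdAddChar ((m * (a * x + b * y) : ZMod n)) *
        stdAddChar ((m * (a * x' + b * y') : ZMod n)) := by
    rw [← AddChar.map_add_eq_mul]
    congr 1
    ring
  have phase_m : stdAddChar ((c : ZMod m) * ((φ y + φ y') * j + (φ z + φ z' + φ x * φ y'))) =
      stdAddChar ((c : ZMod m) * (φ y * j + φ z)) *
        stdAddChar ((c : ZMod m) * (φ y' * (j + φ x) + φ z')) := by
    rw [← AddChar.map_add_eq_mul]
    congr 1
    ring
  rw [phase_n, phase_m, add_assoc]
  ring

/-- `ρ_{a,b,c}` is a group homomorphism: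
`ρ_{a,b,c}((x,y,z)(x',y',z')) = ρ_{a,b,c}(x,y,z) ∘ ρ_{a,b,c}(x',y',z')`. -/
theorem heisRep_hom (n m : ℕ) (hn : 0 < n) (hm : m ∣ n) (a b c : ℕ)
    (ha : a < n / m) (hb : b < n / m) (hc : c < m) (hcm : Nat.gcd c m = 1)
    (g g' : Heis n) (f : ZMod m → ℂ) :
    heisRep n m hm a b c (heisMul g g') f =
      heisRep n m hm a b c g (heisRep n m hm a b c g' f) :=
  heisRep_hom_general n m hn hm a b c g g' f
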